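/- For every integer k ≥ 0, every integer d ≥ 2, every a > 0 and every ξ > 0, there exist real numbers α_{0,k}(ξ), …, α_{k,k}(ξ), depending only on k, d, a and ξ (and not on g), with α_{k,k}(ξ) ≠ 0, such that for every density generator g that is k-times differentiable in a neighborhood of ξ, the function ρ_a = z_a ∘ Ψ_a is k-times differentiable at ψ_a(ξ) and ρ_a^{(k)}(ψ_a(ξ)) = Σ_{i=0}^{k} α_{i,k}(ξ)·g^{(i)}(ξ). -/

import Mathlib

/-!
Write `ρ_a(t) = w(t) · g(Ψ_a(t))` with the smooth weight `w(t) = Ψ_a(t)^{(d-2)/2} / ψ_a'(Ψ_a(t))`.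
By the product and chain rules, `(c · (g ∘ φ))^{(k)} = ∑_{i ≤ k} β_{k,i} · (g^{(i)} ∘ φ)` for smooth
`c`, `φ`, where `β_{0,0} = c` and `β_{k+1,i} = β_{k,i}' + β_{k,i-1} · φ'`. These coefficients do not
involve `g`, and the leading one is `β_{k,k} = c · (φ')^k`. For `c = w`, `φ = Ψ_a` at `t = ψ_a(ξ)`
it is nonzero: `Ψ_a(ψ_a(ξ)) = ξ` gives `w(ψ_a(ξ)) = ξ^{(d-2)/2} / ψ_a'(ξ)`, and differentiating
`Ψ_a ∘ ψ_a = id` gives `Ψ_a'(ψ_a(ξ)) · ψ_a'(ξ) = 1`, so neither derivative vanishes.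
-/

open Real Filter Topology Set
open scoped ContDiff

/-- The transformation `ψ_a(ξ) = -a + (a^{d/2} + ξ^{d/2})^{2/d}`. -/
noncomputable def psi (d : ℕ) (a : ℝ) (ξ : ℝ) : ℝ :=
  -a + (a ^ ((d : ℝ) / 2) + ξ ^ ((d : ℝ) / 2)) ^ (2 / (d : ℝ))

/-- The inverse transformation `Ψ_a(t) = ((t+a)^{d/2} - a^{d/2})^{2/d}`. -/
noncomputable def Psi (d : ℕ) (a : ℝ) (t : ℝ) : ℝ :=
  ((t + a) ^ ((d : ℝ) / 2) - a ^ ((d : ℝ) / 2)) ^ (2 / (d : ℝ))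

/-- The normalized generator `g̃(ξ) = ξ^{(d-2)/2}·g(ξ)`. -/
noncomputable def gtilde (d : ℕ) (g : ℝ → ℝ) (ξ : ℝ) : ℝ :=
  ξ ^ (((d : ℝ) - 2) / 2) * g ξ

/-- The function `z_a(ξ) = g̃(ξ)/ψ_a'(ξ)`. -/
noncomputable def za (d : ℕ) (a : ℝ) (g : ℝ → ℝ) (ξ : ℝ) : ℝ :=
  gtilde d g ξ / deriv (psi d a) ξ

/-- The function `ρ_a = z_a ∘ Ψ_a`. -/
noncomputable def rho (d : ℕ) (a : ℝ) (g : ℝ → ℝ) (t : ℝ) : ℝ :=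
  za d a g (Psi d a t)

noncomputable def chainCoeff (c φ : ℝ → ℝ) : ℕ → ℕ → ℝ → ℝ
  | 0, 0 => c
  | 0, _ + 1 => 0
  | k + 1, 0 => deriv (chainCoeff c φ k 0)
  | k + 1, i + 1 => deriv (chainCoeff c φ k (i + 1)) + chainCoeff c φ k i * deriv φ

section ChainCoeff

variable {c φ : ℝ → ℝ}

theorem chainCoeff_of_lt {k i : ℕ} (h : k < i) : chainCoeff c φ k i = 0 := by
  induction k generalizing i with
  | zero =>
    cases i with
    | zero => omega
    | succ i => rfl
  | succ k ih =>
    cases i with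
    | zero => omega
    | succ i => simp [chainCoeff, ih (show k < i + 1 by omega), ih (show k < i by omega)]

theorem chainCoeff_self (k : ℕ) : chainCoeff c φ k k = c * deriv φ ^ k := by
  induction k with
  | zero => simp [chainCoeff]
  | succ k ih => simp [chainCoeff, chainCoeff_of_lt (Nat.lt_succ_self k), ih, pow_succ, mul_assoc]

theorem sum_chainCoeff_succ (k : ℕ) (t : ℝ) (G : ℕ → ℝ) :
    ∑ i ∈ Finset.range (k + 2), chainCoeff c φ (k + 1) i t * G i =
      ∑ i ∈ Finset.range (k + 1),
        (deriv (chainCoeff c φ k i) t * G i + chainCoeff c φ k i t * deriv φ t * G (i + 1)) := by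
  have hlast : deriv (chainCoeff c φ k (k + 1)) t = 0 := by
    rw [chainCoeff_of_lt (Nat.lt_succ_self k)]; exact deriv_const t 0
  rw [Finset.sum_range_succ']
  simp only [chainCoeff, Pi.add_apply, Pi.mul_apply, add_mul, Finset.sum_add_distrib]
  rw [Finset.sum_range_succ (fun i => deriv (chainCoeff c φ k (i + 1)) t * G (i + 1)), hlast,
    Finset.sum_range_succ' (fun i => deriv (chainCoeff c φ k i) t * G i)]
  ring

variable {U : Set ℝ}

theorem contDiffOn_chainCoeff (hU : IsOpen U) (hc : ContDiffOn ℝ ∞ c U)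
    (hφ : ContDiffOn ℝ ∞ φ U) (k i : ℕ) : ContDiffOn ℝ ∞ (chainCoeff c φ k i) U := by
  induction k generalizing i with
  | zero =>
    cases i with
    | zero => exact hc
    | succ i => exact contDiffOn_const
  | succ k ih =>
    have hderiv (j : ℕ) : ContDiffOn ℝ ∞ (deriv (chainCoeff c φ k j)) U :=
      (ih j).deriv_of_isOpen hU le_rfl
    cases i with
    | zero => exact hderiv 0
    | succ i => exact (hderiv (i + 1)).add ((ih i).mul (hφ.deriv_of_isOpen hU le_rfl))

theorem hasDerivAt_sum_chainCoeff (hU : IsOpen U) (hc : ContDiffOn ℝ ∞ c U)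
    (hφ : ContDiffOn ℝ ∞ φ U) {g : ℝ → ℝ} {k : ℕ} {t : ℝ} (ht : t ∈ U)
    (hg : ∀ i ≤ k, DifferentiableAt ℝ (iteratedDeriv i g) (φ t)) :
    HasDerivAt
      (fun s => ∑ i ∈ Finset.range (k + 1), chainCoeff c φ k i s * iteratedDeriv i g (φ s))
      (∑ i ∈ Finset.range (k + 2), chainCoeff c φ (k + 1) i t * iteratedDeriv i g (φ t)) t := by
  have hasDerivAt_of_contDiffOn {f : ℝ → ℝ} (hf : ContDiffOn ℝ ∞ f U) :
      HasDerivAt f (deriv f t) t :=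
    ((hf.contDiffAt (hU.mem_nhds ht)).differentiableAt (by simp)).hasDerivAt
  rw [sum_chainCoeff_succ]
  refine HasDerivAt.fun_sum fun i hi => ?_
  have hG : HasDerivAt (iteratedDeriv i g) (iteratedDeriv (i + 1) g (φ t)) (φ t) := by
    rw [iteratedDeriv_succ]
    exact (hg i (Nat.lt_succ_iff.mp (Finset.mem_range.mp hi))).hasDerivAt
  exact ((hasDerivAt_of_contDiffOn (contDiffOn_chainCoeff hU hc hφ k i)).mul
    (hG.comp t (hasDerivAt_of_contDiffOn hφ))).congr_deriv (by rw [Function.comp_apply]; ring)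

theorem iteratedDeriv_mul_comp_eq_sum (hU : IsOpen U) (hc : ContDiffOn ℝ ∞ c U)
    (hφ : ContDiffOn ℝ ∞ φ U) {g : ℝ → ℝ} (k : ℕ) {t : ℝ} (ht : t ∈ U)
    (hg : ∀ᶠ x in 𝓝 (φ t), ∀ i < k, DifferentiableAt ℝ (iteratedDeriv i g) x) :
    (∀ i < k, DifferentiableAt ℝ (iteratedDeriv i fun s => c s * g (φ s)) t) ∧
      iteratedDeriv k (fun s => c s * g (φ s)) t =
        ∑ i ∈ Finset.range (k + 1), chainCoeff c φ k i t * iteratedDeriv i g (φ t) := by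
  induction k generalizing t with
  | zero => simp [chainCoeff]
  | succ k ih =>
    have hg' {y : ℝ} (hy : ∀ i < k + 1, DifferentiableAt ℝ (iteratedDeriv i g) y) :
        ∀ i < k, DifferentiableAt ℝ (iteratedDeriv i g) y := fun i hi => hy i (by omega)
    have hφt : ContinuousAt φ t := (hφ.contDiffAt (hU.mem_nhds ht)).continuousAt
    have hnear : ∀ᶠ s in 𝓝 t,
        s ∈ U ∧ ∀ᶠ x in 𝓝 (φ s), ∀ i < k, DifferentiableAt ℝ (iteratedDeriv i g) x :=
      (hU.eventually_mem ht).and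
        ((hφt.eventually hg.eventually_nhds).mono fun _ h => h.mono fun _ => hg')
    have heq : iteratedDeriv k (fun s => c s * g (φ s)) =ᶠ[𝓝 t]
        fun s => ∑ i ∈ Finset.range (k + 1), chainCoeff c φ k i s * iteratedDeriv i g (φ s) :=
      hnear.mono fun s hs => (ih hs.1 hs.2).2
    have hk := (hasDerivAt_sum_chainCoeff hU hc hφ ht
      fun i hi => hg.self_of_nhds i (by omega)).congr_of_eventuallyEq heq
    refine ⟨fun i hi => ?_, by rw [iteratedDeriv_succ]; exact hk.deriv⟩
    rcases Nat.lt_succ_iff_lt_or_eq.mp hi with hi | rfl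
    · exact (ih ht (hg.mono fun _ => hg')).1 i hi
    · exact hk.differentiableAt

end ChainCoeff

theorem rpow_add_sub_rpow_pos {p a t : ℝ} (hp : 0 < p) (ha : 0 ≤ a) (ht : 0 < t) :
    0 < (t + a) ^ p - a ^ p :=
  sub_pos.2 (rpow_lt_rpow ha (by linarith) hp)

section Transform

variable {d : ℕ} {a : ℝ}

theorem psi_pos (hd : 0 < d) (ha : 0 ≤ a) {x : ℝ} (hx : 0 < x) : 0 < psi d a x := by
  have hlt : a < (a ^ ((d : ℝ) / 2) + x ^ ((d : ℝ) / 2)) ^ (2 / (d : ℝ)) :=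
    calc a = (a ^ ((d : ℝ) / 2)) ^ (2 / (d : ℝ)) := by
          rw [← inv_div (d : ℝ) 2, rpow_rpow_inv ha (by positivity)]
      _ < _ := rpow_lt_rpow (by positivity) (lt_add_of_pos_right _ (by positivity)) (by positivity)
  unfold psi
  linarith

theorem Psi_pos (hd : 0 < d) (ha : 0 ≤ a) {t : ℝ} (ht : 0 < t) : 0 < Psi d a t :=
  rpow_pos_of_pos (rpow_add_sub_rpow_pos (by positivity) ha ht) _

theorem Psi_psi (hd : 0 < d) (ha : 0 ≤ a) {x : ℝ} (hx : 0 ≤ x) : Psi d a (psi d a x) = x := by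
  have hp : (d : ℝ) / 2 ≠ 0 := by positivity
  unfold Psi psi
  rw [neg_add_cancel_comm, ← inv_div (d : ℝ) 2, rpow_inv_rpow (by positivity) hp,
    add_sub_cancel_left, rpow_rpow_inv hx hp]

theorem contDiffAt_psi (ha : 0 ≤ a) {x : ℝ} (hx : 0 < x) : ContDiffAt ℝ ∞ (psi d a) x :=
  contDiffAt_const.add ((contDiffAt_rpow_const_of_ne (by positivity)).comp x
    (contDiffAt_const.add (contDiffAt_rpow_const_of_ne hx.ne')))

theorem contDiffAt_Psi (hd : 0 < d) (ha : 0 ≤ a) {t : ℝ} (ht : 0 < t) :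
    ContDiffAt ℝ ∞ (Psi d a) t :=
  (contDiffAt_rpow_const_of_ne
    (rpow_add_sub_rpow_pos (p := (d : ℝ) / 2) (by positivity) ha ht).ne').comp t
    (((contDiffAt_rpow_const_of_ne (ht.trans_le (le_add_of_nonneg_right ha)).ne').comp t
      (contDiffAt_id.add contDiffAt_const)).sub contDiffAt_const)

theorem contDiffOn_psi (ha : 0 ≤ a) : ContDiffOn ℝ ∞ (psi d a) (Ioi 0) :=
  fun _ hx => (contDiffAt_psi ha hx).contDiffWithinAt

theorem contDiffOn_Psi (hd : 0 < d) (ha : 0 ≤ a) : ContDiffOn ℝ ∞ (Psi d a) (Ioi 0) :=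
  fun _ ht => (contDiffAt_Psi hd ha ht).contDiffWithinAt

theorem deriv_Psi_mul_deriv_psi (hd : 0 < d) (ha : 0 ≤ a) {x : ℝ} (hx : 0 < x) :
    deriv (Psi d a) (psi d a x) * deriv (psi d a) x = 1 := by
  have hinv : Psi d a ∘ psi d a =ᶠ[𝓝 x] id :=
    eventually_of_mem (Ioi_mem_nhds hx) fun y hy => Psi_psi hd ha (le_of_lt hy)
  calc deriv (Psi d a) (psi d a x) * deriv (psi d a) x = deriv (Psi d a ∘ psi d a) x :=
        (deriv_comp x ((contDiffAt_Psi hd ha (psi_pos hd ha hx)).differentiableAt (by simp))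
          ((contDiffAt_psi ha hx).differentiableAt (by simp))).symm
    _ = 1 := by rw [hinv.deriv_eq, deriv_id]

theorem deriv_psi_ne_zero (hd : 0 < d) (ha : 0 ≤ a) {x : ℝ} (hx : 0 < x) :
    deriv (psi d a) x ≠ 0 :=
  right_ne_zero_of_mul_eq_one (deriv_Psi_mul_deriv_psi hd ha hx)

noncomputable def rhoWeight (d : ℕ) (a t : ℝ) : ℝ :=
  Psi d a t ^ (((d : ℝ) - 2) / 2) / deriv (psi d a) (Psi d a t)

theorem rho_eq_rhoWeight_mul (g : ℝ → ℝ) :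
    rho d a g = fun t => rhoWeight d a t * g (Psi d a t) := by
  funext t
  rw [rho, za, gtilde, rhoWeight, mul_div_right_comm]

theorem contDiffOn_rhoWeight (hd : 0 < d) (ha : 0 ≤ a) :
    ContDiffOn ℝ ∞ (rhoWeight d a) (Ioi 0) :=
  fun t ht => by
    have hΨ := contDiffAt_Psi hd ha ht
    have hΨt : 0 < Psi d a t := Psi_pos hd ha ht
    have hderiv : ContDiffAt ℝ ∞ (deriv (psi d a)) (Psi d a t) :=
      ((contDiffOn_psi ha).deriv_of_isOpen isOpen_Ioi le_rfl).contDiffAt (Ioi_mem_nhds hΨt)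
    exact (((contDiffAt_rpow_const_of_ne hΨt.ne').comp t hΨ).div (hderiv.comp t hΨ)
      (deriv_psi_ne_zero hd ha hΨt)).contDiffWithinAt

theorem rhoWeight_psi_ne_zero (hd : 0 < d) (ha : 0 ≤ a) {x : ℝ} (hx : 0 < x) :
    rhoWeight d a (psi d a x) ≠ 0 := by
  rw [rhoWeight, Psi_psi hd ha hx.le]
  exact div_ne_zero (rpow_pos_of_pos hx _).ne' (deriv_psi_ne_zero hd ha hx)

end Transform

/-- the `k`-th derivative of `ρ_a` at `ψ_a(ξ)` is a linear combination
`Σ_{i=0}^{k} α_{i,k}(ξ)·g^{(i)}(ξ)` whose coefficients do not depend on `g`, and with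
leading coefficient `α_{k,k}(ξ) ≠ 0`. -/
theorem rho_deriv_decomposition (k d : ℕ) (hd : 2 ≤ d) (a : ℝ) (ha : 0 < a)
    (ξ : ℝ) (hξ : 0 < ξ) :
    ∃ α : Fin (k + 1) → ℝ, α (Fin.last k) ≠ 0 ∧
      ∀ g : ℝ → ℝ,
        (∀ᶠ x in nhds ξ, ∀ i < k, DifferentiableAt ℝ (iteratedDeriv i g) x) →
        ((∀ i < k, DifferentiableAt ℝ (iteratedDeriv i (rho d a g)) (psi d a ξ)) ∧
          iteratedDeriv k (rho d a g) (psi d a ξ) =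
            ∑ i : Fin (k + 1), α i * iteratedDeriv i g ξ) := by
  have hd₀ : 0 < d := by omega
  have hΨ : Psi d a (psi d a ξ) = ξ := Psi_psi hd₀ ha.le hξ.le
  refine ⟨fun i => chainCoeff (rhoWeight d a) (Psi d a) k i (psi d a ξ), ?_, fun g hg => ?_⟩
  · simp only [Fin.val_last, chainCoeff_self, Pi.mul_apply, Pi.pow_apply]
    exact mul_ne_zero (rhoWeight_psi_ne_zero hd₀ ha.le hξ)
      (pow_ne_zero _ (left_ne_zero_of_mul_eq_one (deriv_Psi_mul_deriv_psi hd₀ ha.le hξ)))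
  · have h := iteratedDeriv_mul_comp_eq_sum (g := g) isOpen_Ioi (contDiffOn_rhoWeight hd₀ ha.le)
      (contDiffOn_Psi hd₀ ha.le) k
      (psi_pos hd₀ ha.le hξ : psi d a ξ ∈ Ioi 0) (by rwa [hΨ])
    rw [hΨ, ← Fin.sum_univ_eq_sum_range (fun i => chainCoeff (rhoWeight d a) (Psi d a) k i
      (psi d a ξ) * iteratedDeriv i g ξ)] at h
    rwa [rho_eq_rhoWeight_mul]
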